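/- Let (Λ, π, γ) be a quantified scenario such that some a ∈ A is minimal in F ∪ A with respect to ≺_Q, i.e. Q_a = ∅, and let Λ^{a/0}, Λ^{a/1} be the reduced quantified scenarios obtained by substituting 0 (resp. 1) for the a-variable of φ and removing a. Then the probability–maximal-cost Pareto front satisfies the recursion PMC(Λ̂) = PF(Ψ_A(PMC(Λ̂^{a/0}), PMC(Λ̂^{a/1}), γ_a)), where Ψ_A(I₁,I₂,c) = I₁ ∪ {(p₂, c₂ + c) : (p₂,c₂) ∈ I₂}. -/

import Mathlib

open scoped ENNReal

/-- A scenario `(F, A, φ, Q)`: `φ : 𝔹^F × 𝔹^A → 𝔹` is a Boolean function, and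
`Q` assigns to each attack `a ∈ A` the subset `Q_a ⊆ F` of failures observable when
deciding about `a`; the family `{Q_a}` is totally ordered by inclusion. -/
structure Scenario (F A : Type) where
  φ : (F → Bool) → (A → Bool) → Bool
  Q : A → Finset F
  chain : ∀ a a' : A, Q a ⊆ Q a' ∨ Q a' ⊆ Q a

variable {F A : Type}

/-- A strategy: for each `a ∈ A`, a map `σ_a : 𝔹^{Q_a} → 𝔹`. -/
def Strategy (Λ : Scenario F A) : Type :=
  (a : A) → ({f : F // f ∈ Λ.Q a} → Bool) → Bool

/-- The induced map `σ̂ : 𝔹^F → 𝔹^A`, `σ̂(x)_a = σ_a(x|_{Q_a})`. -/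
def hatS (Λ : Scenario F A) (σ : Strategy Λ) (x : F → Bool) : A → Bool :=
  fun a => σ a fun f => x f.1

/-- The reduced scenario `Λ^{a/b}`: substitute `b` for the `a`-variable of `φ`
and remove `a` from `A`. -/
def Scenario.reduceA [DecidableEq A] (Λ : Scenario F A) (a : A) (b : Bool) :
    Scenario F {a' : A // a' ≠ a} where
  φ := fun x y => Λ.φ x (fun a' => if h : a' = a then b else y ⟨a', h⟩)
  Q := fun a' => Λ.Q a'.1
  chain := fun a' a'' => Λ.chain a'.1 a''.1

/-- The lifted strategy `ι(σ)`: set `σ_a` identically equal to `b` and leave `σ_{a'}`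
unchanged for `a' ≠ a`. -/
def iota [DecidableEq A] (Λ : Scenario F A) (a : A) (b : Bool)
    (σ : Strategy (Λ.reduceA a b)) : Strategy Λ :=
  fun a' x => if h : a' = a then b else σ ⟨a', h⟩ x

/-- Bernoulli weight of an outcome `x ∈ 𝔹^F`:
`(∏_{f : x_f = 1} π_f) · (∏_{f : x_f = 0} (1 - π_f))`. -/
noncomputable def wght [Fintype F] (π : F → ℝ≥0∞) (x : F → Bool) : ℝ≥0∞ :=
  ∏ f, if x f then π f else 1 - π f

/-- Success probability `π̂(σ)`: the probability that `φ(x, σ̂(x)) = 1` when the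
coordinates `x_f` are independent Bernoulli(`π_f`). -/
noncomputable def probS [Fintype F] [DecidableEq F] (Λ : Scenario F A)
    (π : F → ℝ≥0∞) (σ : Strategy Λ) : ℝ≥0∞ :=
  ∑ x : F → Bool, wght π x * (if Λ.φ x (hatS Λ σ x) then 1 else 0)

/-- Cost incurred by strategy `σ` upon observing `x`: `Σ_{a : σ̂(x)_a = 1} γ_a`. -/
noncomputable def costOf [Fintype A] (Λ : Scenario F A) (γ : A → ℝ≥0∞) (σ : Strategy Λ)
    (x : F → Bool) : ℝ≥0∞ :=
  ∑ a, if hatS Λ σ x a then γ a else 0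

/-- Maximal cost `γ̂_m(σ) = max_{x ∈ 𝔹^F} Σ_{a : σ̂(x)_a = 1} γ_a`. -/
noncomputable def maxCost [Fintype F] [DecidableEq F] [Fintype A] (Λ : Scenario F A)
    (γ : A → ℝ≥0∞) (σ : Strategy Λ) : ℝ≥0∞ :=
  ⨆ x : F → Bool, costOf Λ γ σ x

/-- Expected cost `γ̂_e(σ)`. -/
noncomputable def expCost [Fintype F] [DecidableEq F] [Fintype A] (Λ : Scenario F A)
    (π : F → ℝ≥0∞) (γ : A → ℝ≥0∞) (σ : Strategy Λ) : ℝ≥0∞ :=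
  ∑ x : F → Bool, wght π x * costOf Λ γ σ x

/-- `D = [0,1] × [0,∞]`: probability–cost pairs, costs in the extended nonnegative
reals.  We encode it as the pairs `(p, c) : ℝ≥0∞ × ℝ≥0∞` with `p ≤ 1`. -/
def Dom : Set (ℝ≥0∞ × ℝ≥0∞) := {d | d.1 ≤ 1}

/-- `(p,c) ⊑ (p',c')` iff `p ≥ p'` and `c ≤ c'`. -/
def sqle (d d' : ℝ≥0∞ × ℝ≥0∞) : Prop := d'.1 ≤ d.1 ∧ d.2 ≤ d'.2

/-- `d ⊏ d'` iff `d ⊑ d'` and `d ≠ d'`. -/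
def slt (d d' : ℝ≥0∞ × ℝ≥0∞) : Prop := sqle d d' ∧ d ≠ d'

/-- The Pareto front `PF(I) = {d ∈ I : ∀ d' ∈ I, ¬(d' ⊏ d)}`. -/
def PF (I : Set (ℝ≥0∞ × ℝ≥0∞)) : Set (ℝ≥0∞ × ℝ≥0∞) :=
  {d ∈ I | ∀ d' ∈ I, ¬ slt d' d}

/-- `Ψ_A(I₁,I₂,c) = I₁ ∪ {(p₂, c₂ + c) : (p₂,c₂) ∈ I₂}`. -/
def PsiA (I₁ I₂ : Set (ℝ≥0∞ × ℝ≥0∞)) (c : ℝ≥0∞) : Set (ℝ≥0∞ × ℝ≥0∞) :=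
  I₁ ∪ {d | ∃ d₂ ∈ I₂, d = (d₂.1, d₂.2 + c)}

/-!
Since `Q_a = ∅`, the decision `σ_a` of a strategy is a constant `b`, so the strategies of `Λ`
are exactly the lifts `ι(σ')` of strategies `σ'` of `Λ^{a/b}`. A lift has the same success
probability as `σ'`, and its maximal cost exceeds that of `σ'` by `γ_a` exactly when `b = 1`;
hence `τ_m(Σ_Λ) = Ψ_A(τ_m(Σ_{Λ^{a/0}}), τ_m(Σ_{Λ^{a/1}}), γ_a)`. On finite sets every point is
dominated by a point of the Pareto front, and translating costs by `γ_a` preserves domination,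
so the Pareto front of `Ψ_A` does not change when its arguments are replaced by their fronts.
-/

lemma sqle_refl (d : ℝ≥0∞ × ℝ≥0∞) : sqle d d := ⟨le_rfl, le_rfl⟩

lemma sqle_trans {d e f : ℝ≥0∞ × ℝ≥0∞} (hde : sqle d e) (hef : sqle e f) : sqle d f :=
  ⟨hef.1.trans hde.1, hde.2.trans hef.2⟩

lemma sqle_antisymm {d e : ℝ≥0∞ × ℝ≥0∞} (hde : sqle d e) (hed : sqle e d) : d = e :=
  Prod.ext (hed.1.antisymm hde.1) (hde.2.antisymm hed.2)

lemma sqle_iff_toDual_le {d e : ℝ≥0∞ × ℝ≥0∞} :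
    sqle d e ↔ (OrderDual.toDual d.1, d.2) ≤ (OrderDual.toDual e.1, e.2) := by
  simp [sqle, Prod.le_def]

lemma PF_subset (I : Set (ℝ≥0∞ × ℝ≥0∞)) : PF I ⊆ I := fun _ hd => hd.1

lemma Set.Finite.exists_mem_PF_sqle {I : Set (ℝ≥0∞ × ℝ≥0∞)} (hI : I.Finite) {d : ℝ≥0∞ × ℝ≥0∞}
    (hd : d ∈ I) : ∃ d' ∈ PF I, sqle d' d := by
  -- a minimal element, for the product order realising `sqle`, of the points of `I` below `d`
  obtain ⟨m, ⟨hmI, hmd⟩, hmin⟩ :=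
    Set.Finite.exists_minimalFor (fun e : ℝ≥0∞ × ℝ≥0∞ => (OrderDual.toDual e.1, e.2))
      {e ∈ I | sqle e d} (hI.subset fun _ he => he.1) ⟨d, hd, sqle_refl d⟩
  refine ⟨m, ⟨hmI, ?_⟩, hmd⟩
  rintro e heI ⟨hem, hne⟩
  exact hne (sqle_antisymm hem (sqle_iff_toDual_le.mpr
    (hmin ⟨heI, sqle_trans hem hmd⟩ (sqle_iff_toDual_le.mp hem))))

lemma PF_eq_of_subset_of_forall_exists_sqle {I J : Set (ℝ≥0∞ × ℝ≥0∞)} (hJI : J ⊆ I)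
    (hdom : ∀ d ∈ I, ∃ d' ∈ J, sqle d' d) : PF I = PF J := by
  ext d
  constructor
  · rintro ⟨hdI, hmin⟩
    obtain ⟨d', hd'J, hd'd⟩ := hdom d hdI
    obtain rfl : d' = d := by_contra fun hne => hmin d' (hJI hd'J) ⟨hd'd, hne⟩
    exact ⟨hd'J, fun e heJ => hmin e (hJI heJ)⟩
  · rintro ⟨hdJ, hmin⟩
    refine ⟨hJI hdJ, ?_⟩
    rintro e heI ⟨hed, hne⟩
    obtain ⟨e', he'J, he'e⟩ := hdom e heI
    obtain rfl | he'd := eq_or_ne e' d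
    · exact hne (sqle_antisymm hed he'e)
    · exact hmin e' he'J ⟨sqle_trans he'e hed, he'd⟩

lemma PsiA_mono {I₁ I₂ J₁ J₂ : Set (ℝ≥0∞ × ℝ≥0∞)} (h₁ : I₁ ⊆ J₁) (h₂ : I₂ ⊆ J₂) (c : ℝ≥0∞) :
    PsiA I₁ I₂ c ⊆ PsiA J₁ J₂ c := by
  rintro d (hd | ⟨d₂, hd₂, rfl⟩)
  · exact Or.inl (h₁ hd)
  · exact Or.inr ⟨d₂, h₂ hd₂, rfl⟩

lemma PF_PsiA_PF_PF {I₁ I₂ : Set (ℝ≥0∞ × ℝ≥0∞)} (h₁ : I₁.Finite) (h₂ : I₂.Finite)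
    (c : ℝ≥0∞) : PF (PsiA I₁ I₂ c) = PF (PsiA (PF I₁) (PF I₂) c) := by
  refine PF_eq_of_subset_of_forall_exists_sqle (PsiA_mono (PF_subset I₁) (PF_subset I₂) c) ?_
  rintro d (hd | ⟨d₂, hd₂, rfl⟩)
  · obtain ⟨d', hd', hle⟩ := h₁.exists_mem_PF_sqle hd
    exact ⟨d', Or.inl hd', hle⟩
  · obtain ⟨d', hd', hle⟩ := h₂.exists_mem_PF_sqle hd₂
    exact ⟨(d'.1, d'.2 + c), Or.inr ⟨d', hd', rfl⟩, hle.1, add_le_add_left hle.2 c⟩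

noncomputable def tauM [Fintype F] [DecidableEq F] [Fintype A] (Λ : Scenario F A)
    (π : F → ℝ≥0∞) (γ : A → ℝ≥0∞) (σ : Strategy Λ) : ℝ≥0∞ × ℝ≥0∞ :=
  (probS Λ π σ, maxCost Λ γ σ)

instance [Finite A] (Λ : Scenario F A) : Finite (Strategy Λ) := by
  unfold Strategy
  infer_instance

lemma costOf_iota [Fintype A] [DecidableEq A] (Λ : Scenario F A) (γ : A → ℝ≥0∞) (a : A)
    (b : Bool) (σ : Strategy (Λ.reduceA a b)) (x : F → Bool) :
    costOf Λ γ (iota Λ a b σ) x =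
      (if b then γ a else 0) + costOf (Λ.reduceA a b) (fun a' => γ a'.1) σ x := by
  unfold costOf
  rw [Fintype.sum_eq_add_sum_compl a,
    Finset.sum_subtype (p := (· ≠ a)) _ fun a' => Finset.mem_compl.trans Finset.notMem_singleton]
  congr 1
  · simp [hatS, iota]
  · refine Finset.sum_congr rfl fun a' _ => ?_
    simp only [hatS, iota, dif_neg a'.2]
    rfl

lemma maxCost_iota [Fintype F] [DecidableEq F] [Fintype A] [DecidableEq A]
    (Λ : Scenario F A) (γ : A → ℝ≥0∞) (a : A) (b : Bool) (σ : Strategy (Λ.reduceA a b)) :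
    maxCost Λ γ (iota Λ a b σ) =
      (if b then γ a else 0) + maxCost (Λ.reduceA a b) (fun a' => γ a'.1) σ := by
  rw [maxCost, maxCost, ENNReal.add_iSup]
  exact iSup_congr (costOf_iota Λ γ a b σ)

lemma tauM_iota [Fintype F] [DecidableEq F] [Fintype A] [DecidableEq A] (Λ : Scenario F A)
    (π : F → ℝ≥0∞) (γ : A → ℝ≥0∞) (a : A) (b : Bool) (σ : Strategy (Λ.reduceA a b)) :
    tauM Λ π γ (iota Λ a b σ) =
      ((tauM (Λ.reduceA a b) π (fun a' => γ a'.1) σ).1,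
        (tauM (Λ.reduceA a b) π (fun a' => γ a'.1) σ).2 + if b then γ a else 0) := by
  rw [tauM, tauM, maxCost_iota, add_comm]
  rfl

lemma exists_iota_eq [DecidableEq A] (Λ : Scenario F A) {a : A} (hQa : Λ.Q a = ∅)
    (σ : Strategy Λ) : ∃ (b : Bool) (σ' : Strategy (Λ.reduceA a b)), iota Λ a b σ' = σ := by
  have hx : ∀ x y : {f : F // f ∈ Λ.Q a} → Bool, x = y :=
    fun x y => funext fun f => absurd (hQa ▸ f.2) (Finset.notMem_empty f.1)
  refine ⟨σ a fun _ => false, fun a' => σ a'.1, funext fun a' => funext fun x => ?_⟩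
  unfold iota
  split_ifs with h
  · subst h
    exact congrArg (σ a') (hx _ x)
  · rfl

lemma range_tauM_eq_PsiA [Fintype F] [DecidableEq F] [Fintype A] [DecidableEq A]
    (Λ : Scenario F A) (π : F → ℝ≥0∞) (γ : A → ℝ≥0∞) {a : A} (hQa : Λ.Q a = ∅) :
    Set.range (tauM Λ π γ) =
      PsiA (Set.range (tauM (Λ.reduceA a false) π (fun a' => γ a'.1)))
        (Set.range (tauM (Λ.reduceA a true) π (fun a' => γ a'.1))) (γ a) := by
  ext d
  constructor
  · rintro ⟨σ, rfl⟩
    obtain ⟨b, σ', rfl⟩ := exists_iota_eq Λ hQa σ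
    cases b
    · exact Or.inl ⟨σ', by simp [tauM_iota]⟩
    · exact Or.inr ⟨_, ⟨σ', rfl⟩, tauM_iota Λ π γ a true σ'⟩
  · rintro (⟨σ₀, rfl⟩ | ⟨d₁, ⟨σ₁, rfl⟩, rfl⟩)
    · exact ⟨iota Λ a false σ₀, by simp [tauM_iota]⟩
    · exact ⟨iota Λ a true σ₁, tauM_iota Λ π γ a true σ₁⟩

theorem PMC_recursion_a_general [Fintype F] [Fintype A] [DecidableEq F] [DecidableEq A]
    (Λ : Scenario F A) (π : F → ℝ≥0∞) (γ : A → ℝ≥0∞)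
    (a : A) (hQa : Λ.Q a = ∅) :
    PF (Set.range (fun σ : Strategy Λ => (probS Λ π σ, maxCost Λ γ σ))) =
      PF (PsiA
        (PF (Set.range (fun σ0 : Strategy (Λ.reduceA a false) =>
          (probS (Λ.reduceA a false) π σ0,
            maxCost (Λ.reduceA a false) (fun a' => γ a'.1) σ0))))
        (PF (Set.range (fun σ1 : Strategy (Λ.reduceA a true) =>
          (probS (Λ.reduceA a true) π σ1,
            maxCost (Λ.reduceA a true) (fun a' => γ a'.1) σ1))))
        (γ a)) :=
  (congrArg PF (range_tauM_eq_PsiA Λ π γ hQa)).trans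
    (PF_PsiA_PF_PF (Set.finite_range _) (Set.finite_range _) (γ a))

/-- The recursion `PMC(Λ̂) = PF(Ψ_A(PMC(Λ̂^{a/0}), PMC(Λ̂^{a/1}), γ_a))`, where
`PMC(Λ̂) = PF(τ_m(Σ_Λ))`. -/
theorem PMC_recursion_a [Fintype F] [Fintype A] [DecidableEq F] [DecidableEq A]
    (Λ : Scenario F A) (π : F → ℝ≥0∞) (hπ : ∀ g, π g ≤ 1) (γ : A → ℝ≥0∞)
    (a : A) (hQa : Λ.Q a = ∅) :
    PF (Set.range (fun σ : Strategy Λ => (probS Λ π σ, maxCost Λ γ σ))) =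
      PF (PsiA
        (PF (Set.range (fun σ0 : Strategy (Λ.reduceA a false) =>
          (probS (Λ.reduceA a false) π σ0,
            maxCost (Λ.reduceA a false) (fun a' => γ a'.1) σ0))))
        (PF (Set.range (fun σ1 : Strategy (Λ.reduceA a true) =>
          (probS (Λ.reduceA a true) π σ1,
            maxCost (Λ.reduceA a true) (fun a' => γ a'.1) σ1))))
        (γ a)) :=
  PMC_recursion_a_general Λ π γ a hQa
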